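/- arXiv:1812.09663 — 2 statements merged into one kernel-verified Lean document; each statement's English description precedes it below -/
import Mathlib

section
/- Let F ⊆ G be a field extension with G ≠ F, let α ∈ G \ F with minimal polynomial p over F, and let L = F((t)) be the field of Laurent series over F. Then p remains irreducible over L. -/
/-!
View `α` as the constant `a = C α` in `G⸨X⸩`, an algebra over `F⸨X⸩` by applying
`algebraMap F G` coefficientwise. Comparing coefficients, `F`-linearly independent elements of
`G` stay `F⸨X⸩`-linearly independent as constants, so `1, a, …, a ^ (n - 1)` are independent,
where `n = deg p`. The monic polynomial `p` of degree `n` kills `a`, so it is the minimal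
polynomial of `a` over the field `F⸨X⸩`, hence irreducible there.
-/

open Polynomial

namespace HahnSeries

variable {Γ R S : Type*} [AddCommMonoid Γ] [PartialOrder Γ] [IsOrderedCancelAddMonoid Γ]

def mapRingHom [Semiring R] [Semiring S] (f : R →+* S) : R⟦Γ⟧ →+* S⟦Γ⟧ where
  toFun x := x.map f
  map_one' := HahnSeries.map_one f.toMonoidWithZeroHom
  map_mul' _ _ := HahnSeries.map_mul f.toNonUnitalRingHom
  map_zero' := HahnSeries.map_zero f.toAddMonoidHom.toZeroHom
  map_add' _ _ := HahnSeries.map_add f.toAddMonoidHom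

@[simp]
theorem coeff_mapRingHom [Semiring R] [Semiring S] (f : R →+* S) (x : R⟦Γ⟧) (g : Γ) :
    (mapRingHom f x).coeff g = f (x.coeff g) := rfl

@[simp]
theorem mapRingHom_C [Semiring R] [Semiring S] (f : R →+* S) (r : R) :
    mapRingHom f (C r : R⟦Γ⟧) = C (f r) := map_C r f

section Algebra

variable {A : Type*}

/-- Not a global instance: for `A = R` it would not be reducibly equal to `Algebra.id`. -/
noncomputable abbrev mapAlgebra [CommSemiring R] [CommSemiring A] [Algebra R A] :
    Algebra R⟦Γ⟧ A⟦Γ⟧ :=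
  (mapRingHom (algebraMap R A)).toAlgebra

attribute [local instance] mapAlgebra

theorem coeff_smul_C [CommSemiring R] [CommSemiring A] [Algebra R A] (c : R⟦Γ⟧) (a : A)
    (g : Γ) : (c • C a).coeff g = c.coeff g • a := by
  rw [Algebra.smul_def, RingHom.algebraMap_toAlgebra, C_apply, coeff_mul_single_zero,
    coeff_mapRingHom, Algebra.smul_def]

theorem linearIndependent_C [CommRing R] [CommRing A] [Algebra R A] {ι : Type*} {v : ι → A}
    (hv : LinearIndependent R v) : LinearIndependent R⟦Γ⟧ fun i => (C (v i) : A⟦Γ⟧) := by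
  rw [linearIndependent_iff'] at hv ⊢
  intro s c hc i hi
  ext g
  refine hv s (fun j => (c j).coeff g) ?_ i hi
  simpa only [coeff_sum, coeff_smul_C, coeff_zero] using congr_arg (coeff · g) hc

end Algebra

end HahnSeries

theorem LaurentSeries.mapRingHom_comp_algebraMap {R S : Type*} [CommSemiring R] [Semiring S]
    (f : R →+* S) :
    (HahnSeries.mapRingHom f).comp (algebraMap R (LaurentSeries R)) = HahnSeries.C.comp f := by
  ext r : 1
  simp [RingHom.algebraMap_toAlgebra, -HahnSeries.C_apply]

theorem Polynomial.eq_zero_of_aeval_eq_zero_of_linearIndependent_pow {R A : Type*} [CommRing R]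
    [Ring A] [Algebra R A] {x : A} {n : ℕ}
    (hx : LinearIndependent R fun i : Fin n => x ^ (i : ℕ)) {q : R[X]} (hq : q.natDegree < n)
    (hqx : aeval x q = 0) : q = 0 := by
  rw [aeval_eq_sum_range' hq, ← Fin.sum_univ_eq_sum_range (fun i => q.coeff i • x ^ i)] at hqx
  ext i
  rw [coeff_zero]
  rcases lt_or_ge i n with hi | hi
  · exact Fintype.linearIndependent_iff.mp hx (fun j => q.coeff j) hqx ⟨i, hi⟩
  · exact coeff_eq_zero_of_natDegree_lt (hq.trans_le hi)

theorem minpoly.eq_of_linearIndependent_pow {K A : Type*} [Field K] [Ring A] [Algebra K A]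
    {x : A} {p : K[X]} (hp : p.Monic) (hpx : Polynomial.aeval x p = 0)
    (hx : LinearIndependent K fun i : Fin p.natDegree => x ^ (i : ℕ)) : minpoly K x = p := by
  refine (minpoly.unique K x hp hpx fun q hq hqx => ?_).symm
  by_contra! hlt
  exact hq.ne_zero (eq_zero_of_aeval_eq_zero_of_linearIndependent_pow hx
    (natDegree_lt_natDegree hq.ne_zero hlt) hqx)

theorem minpoly_irreducible_over_laurentSeries_general (F G : Type) [Field F] [Field G]
    [Algebra F G] (α : G) (hα : IsIntegral F α) :
    Irreducible ((minpoly F α).map (algebraMap F (LaurentSeries F))) := by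
  let _ : Algebra (LaurentSeries F) (LaurentSeries G) := HahnSeries.mapAlgebra
  set a : LaurentSeries G := HahnSeries.C α
  set P := (minpoly F α).map (algebraMap F (LaurentSeries F))
  have hP : P.Monic := (minpoly.monic hα).map _
  have hroot : aeval a P = 0 := by
    rw [aeval_def, eval₂_map, RingHom.algebraMap_toAlgebra,
      LaurentSeries.mapRingHom_comp_algebraMap, ← hom_eval₂, ← aeval_def, minpoly.aeval, map_zero]
  have hpow : LinearIndependent (LaurentSeries F) fun i : Fin P.natDegree => a ^ (i : ℕ) := by
    rw [natDegree_map]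
    simpa only [a, ← map_pow] using
      HahnSeries.linearIndependent_C (Γ := ℤ) (linearIndependent_pow (K := F) α)
  rw [← minpoly.eq_of_linearIndependent_pow hP hroot hpow]
  exact minpoly.irreducible ⟨P, hP, by rwa [← aeval_def]⟩

/-- Let `F ⊆ G` be a field extension, `α ∈ G \ F` algebraic over `F` with minimal
polynomial `p`, and `L = F⸨t⸩` the field of Laurent series over `F`.  Then `p` remains
irreducible over `L`. -/
theorem minpoly_irreducible_over_laurentSeries (F G : Type) [Field F] [Field G]
    [Algebra F G] (α : G) (hα : IsIntegral F α)
    (hnot : α ∉ (algebraMap F G).range) :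
    Irreducible ((minpoly F α).map (algebraMap F (LaurentSeries F))) :=
  minpoly_irreducible_over_laurentSeries_general F G α hα
end

section
/- If F ⊊ G is a proper field extension with G/F finite, then there is no F-algebra isomorphism between the Laurent series fields F((s)) and G((t)). -/
set_option synthInstance.maxHeartbeats 1000000
set_option maxHeartbeats 1000000

/-!
A field `K` is algebraically closed in `K⸨X⸩`: an element integral over `K` is integral over the
integrally closed ring `K⟦X⟧`, hence a power series, and subtracting its constant term leaves an
element integral over `K` that is not a unit, hence zero. An `F`-isomorphism `F⸨s⸩ ≃ G⸨t⸩` would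
carry the constant `x ∈ G \ F`, which is integral over `F`, to an element of `F⸨s⸩` integral over
`F`, i.e. to a constant `a ∈ F`, forcing `x = a`.
-/

open PowerSeries

theorem PowerSeries.eq_C_constantCoeff_of_isIntegral {K : Type*} [Field K] {f : K⟦X⟧}
    (hf : IsIntegral K f) : f = C (constantCoeff f) := by
  by_contra hne
  have hint : IsIntegral K (f - C (constantCoeff f)) := by
    simpa [PowerSeries.algebraMap_apply] using hf.sub (isIntegral_algebraMap (x := constantCoeff f))
  have hunit := hint.isUnit (sub_ne_zero.mpr hne)
  simp [PowerSeries.isUnit_iff_constantCoeff] at hunit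

namespace LaurentSeries

theorem algebraMap_comp_algebraMap (R A : Type*) [CommSemiring R] [CommSemiring A] [Algebra R A] :
    (algebraMap A A⸨X⸩).comp (algebraMap R A) = algebraMap R A⸨X⸩ := by
  ext r
  simp [HahnSeries.algebraMap_apply', PowerSeries.algebraMap_apply]

/- `IsScalarTower R R⟦X⟧ R⸨X⸩` is not available, since the `SMul R R⸨X⸩` instance is not the one
underlying `Algebra R R⸨X⸩`; the compatibility of the algebra maps holds by `rfl` instead. -/
noncomputable def ofPowerSeriesAlgHom (R : Type*) [CommSemiring R] : R⟦X⟧ →ₐ[R] R⸨X⸩ :=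
  { algebraMap R⟦X⟧ R⸨X⸩ with commutes' := fun _ => rfl }

theorem exists_algebraMap_eq_of_isIntegral {K : Type*} [Field K] {f : K⸨X⸩}
    (hf : IsIntegral K f) : ∃ c : K, algebraMap K K⸨X⸩ c = f := by
  have hf' : IsIntegral K⟦X⟧ f :=
    hf.map_of_comp_eq (algebraMap K K⟦X⟧) (RingHom.id K⸨X⸩) rfl
  obtain ⟨g, rfl⟩ := IsIntegrallyClosed.isIntegral_iff.mp hf'
  have hg : IsIntegral K g :=
    (isIntegral_algHom_iff (ofPowerSeriesAlgHom K) HahnSeries.ofPowerSeries_injective).mp hf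
  refine ⟨constantCoeff g, ?_⟩
  rw [PowerSeries.eq_C_constantCoeff_of_isIntegral hg]
  simp [HahnSeries.algebraMap_apply']

end LaurentSeries

/-- If `F ⊊ G` is a proper finite field extension, then there is no `F`-algebra
isomorphism between the Laurent series fields `F⸨s⸩` and `G⸨t⸩`. -/
theorem no_algIso_laurentSeries_of_proper_finite_extension (F G : Type) [Field F] [Field G]
    [Algebra F G] [FiniteDimensional F G]
    (h : ∃ x : G, x ∉ (algebraMap F G).range) :
    IsEmpty (LaurentSeries F ≃ₐ[F] LaurentSeries G) := by
  obtain ⟨x, hx⟩ := h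
  refine ⟨fun e => hx ?_⟩
  have hx_int : IsIntegral F (algebraMap G (LaurentSeries G) x) :=
    (IsIntegral.of_finite F x).map_of_comp_eq (RingHom.id F) (algebraMap G (LaurentSeries G))
      (LaurentSeries.algebraMap_comp_algebraMap F G).symm
  obtain ⟨a, ha⟩ :=
    LaurentSeries.exists_algebraMap_eq_of_isIntegral ((isIntegral_algEquiv e.symm).mpr hx_int)
  refine ⟨a, (algebraMap G (LaurentSeries G)).injective ?_⟩
  rw [← RingHom.comp_apply, LaurentSeries.algebraMap_comp_algebraMap, ← e.commutes, ha,
    e.apply_symm_apply]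
end
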